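/- Let M and l be natural numbers. If l ≤ M, then ∫_{−1}^{1} ((1−x)/2)^M · P_l(x) dx = 2·(−1)^l·(M!)²/((M−l)!·(M+l+1)!). If l > M, then ∫_{−1}^{1} ((1−x)/2)^M · P_l(x) dx = 0. -/

import Mathlib

/-!
Rodrigues' formula lets one integrate by parts `l` times: every derivative of `(x² - 1)^l` of
order `< l` vanishes at `±1`, so `∫ f P_l = (-1)^l / (2^l l!) ∫ f^(l) (x² - 1)^l`. For
`f = (1 - x)^M` the `l`-th derivative is `(-1)^l M!/(M-l)! (1 - x)^(M-l)`, which is zero when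
`l > M`; otherwise what remains is the Beta integral
`∫_{-1}^{1} (1 - x)^M (1 + x)^l = 2^(M+l+1) M! l! / (M+l+1)!`.
-/

noncomputable def legendreP (l : ℕ) (x : ℝ) : ℝ :=
  (1 / (2 ^ l * l.factorial)) * iteratedDeriv l (fun y : ℝ => (y ^ 2 - 1) ^ l) x

open Polynomial intervalIntegral
open scoped Nat

namespace Polynomial

theorem iteratedDeriv_eval {𝕜 : Type*} [NontriviallyNormedField 𝕜] (p : 𝕜[X]) (n : ℕ) :
    iteratedDeriv n (fun x => p.eval x) = fun x => (derivative^[n] p).eval x := by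
  induction n generalizing p with
  | zero => simp
  | succ n ih =>
    have hd : _root_.deriv (fun x => p.eval x) = fun x => p.derivative.eval x := by
      funext x; exact p.deriv
    rw [iteratedDeriv_succ', hd, ih, Function.iterate_succ_apply]

theorem eval_iterate_derivative_pow_eq_zero {R : Type*} [CommRing R] {r : R[X]} {a : R}
    (hr : r.eval a = 0) {m n : ℕ} (hmn : m < n) : (derivative^[m] (r ^ n)).eval a = 0 := by
  obtain ⟨s, hs⟩ := pow_sub_dvd_iterate_derivative_pow r n m
  rw [hs, eval_mul, eval_pow, hr, zero_pow (Nat.sub_ne_zero_of_lt hmn), zero_mul]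

theorem iterate_derivative_one_sub_X_pow {R : Type*} [CommRing R] (n k : ℕ) :
    derivative^[k] ((1 - X : R[X]) ^ n)
      = C ((-1) ^ k * (n.descFactorial k : R)) * (1 - X) ^ (n - k) := by
  have h := iterate_derivative_comp_one_sub_X (X ^ n : R[X]) k
  rw [X_pow_comp, iterate_derivative_X_pow_eq_C_mul, mul_comp, C_comp, X_pow_comp] at h
  rw [h, C_mul, C_pow, C_neg, C_1, mul_assoc]

theorem integral_eval_mul_eval_derivative (p q : ℝ[X]) (a b : ℝ) :
    ∫ x in a..b, q.eval x * (derivative p).eval x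
      = q.eval b * p.eval b - q.eval a * p.eval a
        - ∫ x in a..b, (derivative q).eval x * p.eval x :=
  integral_mul_deriv_eq_deriv_mul (fun x _ => q.hasDerivAt x) (fun x _ => p.hasDerivAt x)
    (q.derivative.continuous.intervalIntegrable _ _)
    (p.derivative.continuous.intervalIntegrable _ _)

theorem integral_eval_mul_eval_iterate_derivative (p q : ℝ[X]) (a b : ℝ) (n : ℕ)
    (ha : ∀ k < n, (derivative^[k] q * derivative^[n - 1 - k] p).eval a = 0)
    (hb : ∀ k < n, (derivative^[k] q * derivative^[n - 1 - k] p).eval b = 0) :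
    ∫ x in a..b, q.eval x * (derivative^[n] p).eval x
      = (-1) ^ n * ∫ x in a..b, (derivative^[n] q).eval x * p.eval x := by
  induction n generalizing q with
  | zero => simp
  | succ n ih =>
    have hshift : ∀ c,
        (∀ k < n + 1, (derivative^[k] q * derivative^[n + 1 - 1 - k] p).eval c = 0) →
          ∀ k < n, (derivative^[k] (derivative q) * derivative^[n - 1 - k] p).eval c = 0 := by
      intro c hc k hk
      rw [← Function.iterate_succ_apply, show n - 1 - k = n + 1 - 1 - (k + 1) by omega]
      exact hc (k + 1) (by omega)
    have ha0 := ha 0 n.succ_pos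
    have hb0 := hb 0 n.succ_pos
    simp only [Function.iterate_zero, id_eq, Nat.add_sub_cancel, Nat.sub_zero, eval_mul] at ha0 hb0
    rw [Function.iterate_succ_apply', integral_eval_mul_eval_derivative, ha0, hb0,
      ih (derivative q) (hshift a ha) (hshift b hb), Function.iterate_succ_apply, pow_succ]
    ring

end Polynomial

/-- `(x - a)^n` is a multiple of the `m`-th derivative of `(x - a)^(m+n)`, so integrating by parts
moves all `m` derivatives onto `(b - x)^m`. -/
theorem integral_sub_pow_mul_sub_pow (a b : ℝ) (m n : ℕ) :
    ∫ x in a..b, (b - x) ^ m * (x - a) ^ n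
      = (b - a) ^ (m + n + 1) * m ! * n ! / (m + n + 1)! := by
  set p : ℝ[X] := (X - C a) ^ (m + n)
  set q : ℝ[X] := (C b - X) ^ m
  have hp : derivative^[m] p = C ((m + n)! / n ! : ℝ) * (X - C a) ^ n := by
    have h := Nat.factorial_mul_descFactorial (Nat.le_add_right m n)
    rw [Nat.add_sub_cancel_left] at h
    rw [iterate_derivative_X_sub_pow, Nat.add_sub_cancel_left, nsmul_eq_mul, ← C_eq_natCast,
      ← h, Nat.cast_mul, mul_div_cancel_left₀ _ (by positivity)]
  have hq : derivative^[m] q = C ((-1) ^ m * m ! : ℝ) := by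
    rw [show q = C ((-1) ^ m) * (X - C b) ^ m by
      rw [map_pow, map_neg, map_one, ← neg_pow, neg_sub],
      iterate_derivative_C_mul, iterate_derivative_X_sub_pow_self, C_mul, C_eq_natCast]
  have ha : ∀ k < m, (derivative^[k] q * derivative^[m - 1 - k] p).eval a = 0 := fun k hk => by
    rw [eval_mul, eval_iterate_derivative_pow_eq_zero (r := X - C a) (by simp) (by omega),
      mul_zero]
  have hb : ∀ k < m, (derivative^[k] q * derivative^[m - 1 - k] p).eval b = 0 := fun k hk => by
    rw [eval_mul, eval_iterate_derivative_pow_eq_zero (r := C b - X) (by simp) hk, zero_mul]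
  calc ∫ x in a..b, (b - x) ^ m * (x - a) ^ n
      = n ! / (m + n)! * ∫ x in a..b, q.eval x * (derivative^[m] p).eval x := by
        rw [← integral_const_mul]
        refine integral_congr fun x _ => ?_
        simp only [hp, q, eval_mul, eval_C, eval_pow, eval_sub, eval_X]
        field_simp
    _ = n ! / (m + n)! * m ! * ∫ x in a..b, (x - a) ^ (m + n) := by
        rw [integral_eval_mul_eval_iterate_derivative p q a b m ha hb, hq]
        simp only [p, eval_C, eval_pow, eval_sub, eval_X, integral_const_mul]
        linear_combination (n ! / (m + n)! * m ! * ∫ x in a..b, (x - a) ^ (m + n)) *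
          (by rw [← mul_pow]; norm_num : (-1 : ℝ) ^ m * (-1) ^ m = 1)
    _ = (b - a) ^ (m + n + 1) * m ! * n ! / (m + n + 1)! := by
        rw [integral_comp_sub_right (fun x => x ^ (m + n)), integral_pow, sub_self,
          Nat.factorial_succ]
        push_cast
        field_simp
        ring

theorem integral_one_sub_pow_mul_sq_sub_one_pow (k l : ℕ) :
    ∫ x in (-1 : ℝ)..1, (1 - x) ^ k * (x ^ 2 - 1) ^ l
      = (-1 : ℝ) ^ l * 2 ^ (k + 2 * l + 1) * (k + l)! * l ! / (k + 2 * l + 1)! := by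
  calc ∫ x in (-1 : ℝ)..1, (1 - x) ^ k * (x ^ 2 - 1) ^ l
      = (-1) ^ l * ∫ x in (-1 : ℝ)..1, (1 - x) ^ (k + l) * (x - -1) ^ l := by
        rw [← integral_const_mul]
        refine integral_congr fun x _ => ?_
        rw [show x ^ 2 - 1 = -((1 - x) * (x - -1)) by ring, neg_pow, mul_pow]
        ring
    _ = _ := by
        rw [integral_sub_pow_mul_sub_pow, show k + l + l + 1 = k + 2 * l + 1 by ring]
        norm_num
        ring

theorem integral_eval_mul_legendreP (f : ℝ[X]) (l : ℕ) :
    ∫ x in (-1 : ℝ)..1, f.eval x * legendreP l x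
      = (-1) ^ l / (2 ^ l * l !) *
          ∫ x in (-1 : ℝ)..1, (derivative^[l] f).eval x * (x ^ 2 - 1) ^ l := by
  set P : ℝ[X] := (X ^ 2 - 1) ^ l
  have hP : (fun y : ℝ => (y ^ 2 - 1) ^ l) = fun y => P.eval y := by
    funext y; simp [P]
  have hvanish : ∀ c : ℝ, c ^ 2 = 1 →
      ∀ k < l, (derivative^[k] f * derivative^[l - 1 - k] P).eval c = 0 := by
    intro c hc k hk
    rw [eval_mul, eval_iterate_derivative_pow_eq_zero (by simp [hc]) (by omega), mul_zero]
  calc ∫ x in (-1 : ℝ)..1, f.eval x * legendreP l x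
      = 1 / (2 ^ l * l !) * ∫ x in (-1 : ℝ)..1, f.eval x * (derivative^[l] P).eval x := by
        simp only [legendreP, hP, iteratedDeriv_eval, ← integral_const_mul]
        exact integral_congr fun x _ => by ring
    _ = _ := by
        rw [integral_eval_mul_eval_iterate_derivative P f (-1) 1 l (hvanish _ (by norm_num))
          (hvanish _ (by norm_num))]
        simp only [P, eval_pow, eval_sub, eval_X, eval_one]
        ring

theorem integral_one_sub_div_two_pow_mul_legendreP (M l : ℕ) :
    ∫ x in (-1 : ℝ)..1, ((1 - x) / 2) ^ M * legendreP l x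
      = M.descFactorial l / (2 ^ M * 2 ^ l * l !) *
          ∫ x in (-1 : ℝ)..1, (1 - x) ^ (M - l) * (x ^ 2 - 1) ^ l := by
  have h := integral_eval_mul_legendreP ((1 - X) ^ M) l
  simp only [iterate_derivative_one_sub_X_pow, eval_mul, eval_C, eval_pow, eval_sub, eval_one,
    eval_X, mul_assoc, integral_const_mul] at h
  rw [integral_congr fun x _ => by rw [div_pow, div_mul_eq_mul_div], integral_div, h]
  field_simp
  rw [← pow_mul, pow_mul', neg_one_sq, one_pow, one_mul]

/-- Legendre coefficients of `((1−x)/2)^M`: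
`∫_{−1}^{1} ((1−x)/2)^M P_l(x) dx = 2(−1)^l (M!)²/((M−l)!(M+l+1)!)` for `l ≤ M`
and `0` for `l > M`. -/
theorem legendre_coefficient_integral (M l : ℕ) :
    (l ≤ M →
      (∫ x in (-1:ℝ)..1, ((1 - x) / 2) ^ M * legendreP l x)
        = 2 * (-1 : ℝ) ^ l * (M.factorial : ℝ) ^ 2 /
            ((M - l).factorial * (M + l + 1).factorial)) ∧
    (M < l →
      (∫ x in (-1:ℝ)..1, ((1 - x) / 2) ^ M * legendreP l x) = 0) := by
  refine ⟨fun hlM => ?_, fun hMl => ?_⟩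
  · obtain ⟨k, rfl⟩ := Nat.exists_eq_add_of_le' hlM
    have hdesc : ((k + l).descFactorial l : ℝ) = (k + l)! / k ! := by
      have h := Nat.factorial_mul_descFactorial hlM
      rw [Nat.add_sub_cancel] at h
      rw [← h, Nat.cast_mul, mul_div_cancel_left₀ _ (by positivity)]
    rw [integral_one_sub_div_two_pow_mul_legendreP, Nat.add_sub_cancel,
      integral_one_sub_pow_mul_sq_sub_one_pow, hdesc, show k + l + l + 1 = k + 2 * l + 1 by ring]
    field_simp
    ring
  · rw [integral_one_sub_div_two_pow_mul_legendreP, Nat.descFactorial_eq_zero_iff_lt.mpr hMl]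
    simp
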